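/- Let s ∈ (0,2] and α > 0. Then there exist constants c, C > 0, depending only on α and s, such that for all x ≥ 0: c · exp(α x^s) ≤ ℰ_{2/s}(α^{2/s} x²) ≤ C · exp(α x^s), where ℰ_a(y) = Σ_{k=0}^{∞} y^k / Γ(ak+1) is the Mittag-Leffler function of parameter a = 2/s. -/

import Mathlib

noncomputable section

/-- The Mittag-Leffler function `ℰ_a(y) = ∑_{k=0}^∞ y^k / Γ(ak+1)`. -/
def mittagLeffler (a y : ℝ) : ℝ :=
  ∑' k : ℕ, y ^ k / Real.Gamma (a * k + 1)

/-!
Put `t = α x^s` and `a = 2/s ≥ 1`; then `ℰ_a(t^a) = ∑ₖ φ(ak)` and `e^t = ∑ₘ φ(m)`, where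
`φ(y) = powDivGamma t y = t^y / Γ(y+1)`. Log-convexity of `Γ` gives
`Γ(y+1) y^θ ≤ Γ(y+1+θ) ≤ Γ(y+1) (y+1+θ)^θ`, so `φ(y+θ)` lies between `φ(y) (t/(y+1+θ))^θ` and
`φ(y) (t/y)^θ`.

Upper bound: `φ(ak) ≤ φ(m) + 2 φ(m+1)` for `m = ⌊ak⌋`, and `k ↦ ⌊ak⌋` is injective as `a ≥ 1`.
Lower bound: by a Chernoff estimate the terms `m < 2t + 2` carry half of `e^t`; for these and
`t ≥ a + 2`, `φ(m) ≤ 3^a φ(a⌈m/a⌉)`, and every `k` equals `⌈m/a⌉` for at most `⌈a⌉ + 1` values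
of `m`.
-/

open Real Finset Nat

namespace Real

theorem Gamma_add_le_Gamma_mul_rpow {x δ : ℝ} (hx : 0 < x) (hδ : 0 ≤ δ) :
    Gamma (x + δ) ≤ Gamma x * (x + δ) ^ δ := by
  rcases hδ.eq_or_lt with rfl | hδ
  · simp
  have hxδ : 0 < x + δ := by positivity
  have hslope := convexOn_log_Gamma.slope_mono_adjacent (x := x) (y := x + δ) (z := x + δ + 1)
    hx (Set.mem_Ioi.2 (by positivity)) (by linarith) (by linarith)
  simp only [Function.comp_apply, Gamma_add_one hxδ.ne',
    log_mul hxδ.ne' (Gamma_pos_of_pos hxδ).ne', add_sub_cancel_left, div_one] at hslope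
  rw [div_le_iff₀ hδ] at hslope
  rw [← log_le_log_iff (Gamma_pos_of_pos hxδ) (by positivity [Gamma_pos_of_pos hx]),
    log_mul (Gamma_pos_of_pos hx).ne' (by positivity), log_rpow hxδ]
  linarith

theorem Gamma_mul_rpow_le_Gamma_add {x δ : ℝ} (hx : 1 < x) (hδ : 0 ≤ δ) :
    Gamma x * (x - 1) ^ δ ≤ Gamma (x + δ) := by
  rcases hδ.eq_or_lt with rfl | hδ
  · simp
  have hx0 : 0 < x - 1 := by linarith
  have hslope := convexOn_log_Gamma.slope_mono_adjacent (x := x - 1) (y := x) (z := x + δ)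
    hx0 (Set.mem_Ioi.2 (by linarith)) (by linarith) (by linarith)
  have hrec : Gamma x = (x - 1) * Gamma (x - 1) := by
    simpa using Gamma_add_one hx0.ne'
  simp only [Function.comp_apply, hrec, log_mul hx0.ne' (Gamma_pos_of_pos hx0).ne',
    sub_sub_cancel, div_one, add_sub_cancel_left] at hslope
  rw [le_div_iff₀ hδ] at hslope
  rw [← log_le_log_iff (by positivity [Gamma_pos_of_pos hx0]) (Gamma_pos_of_pos (by positivity)),
    log_mul (by positivity [Gamma_pos_of_pos hx0]) (by positivity), log_rpow hx0, hrec,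
    log_mul hx0.ne' (Gamma_pos_of_pos hx0).ne']
  linarith

theorem hasSum_pow_div_factorial (t : ℝ) : HasSum (fun n : ℕ ↦ t ^ n / n !) (exp t) := by
  simpa [Real.exp_eq_exp_ℝ] using NormedSpace.expSeries_div_hasSum_exp t

theorem exp_le_sum_range_add_exp_mul_div_pow {r t : ℝ} (hr : 1 ≤ r) (ht : 0 ≤ t) (M : ℕ) :
    exp t ≤ ∑ m ∈ range M, t ^ m / m ! + exp (r * t) / r ^ M := by
  have hhead : HasSum (fun m ↦ if m < M then t ^ m / m ! else 0) (∑ m ∈ range M, t ^ m / m !) := by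
    have h : HasSum (fun m ↦ if m < M then t ^ m / m ! else 0)
        (∑ m ∈ range M, if m < M then t ^ m / m ! else 0) :=
      hasSum_sum_of_ne_finset_zero fun m hm ↦ if_neg (by simpa using hm)
    rwa [sum_congr rfl fun m hm ↦ if_pos (mem_range.1 hm)] at h
  have htail := (hasSum_pow_div_factorial (r * t)).div_const (r ^ M)
  refine hasSum_le (fun m ↦ ?_) (hasSum_pow_div_factorial t) (hhead.add htail)
  · split_ifs with hm
    · have : 0 ≤ (r * t) ^ m / m ! / r ^ M := by positivity
      linarith
    · have hrm : (r * t) ^ m / m ! / r ^ M = t ^ m / m ! * (r ^ m / r ^ M) := by ring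
      rw [zero_add, hrm]
      exact le_mul_of_one_le_right (by positivity)
        ((one_le_div (by positivity)).2 (pow_le_pow_right₀ hr (not_lt.1 hm)))

theorem exp_le_two_mul_sum_range {t : ℝ} (ht : 0 ≤ t) {M : ℕ} (hM : 2 * t + 1 ≤ M) :
    exp t ≤ 2 * ∑ m ∈ range M, t ^ m / m ! := by
  have h := exp_le_sum_range_add_exp_mul_div_pow (one_le_exp zero_le_one) ht M
  have he3 : exp 1 ≤ 3 := (exp_one_lt_d9.trans (by norm_num)).le
  have he2 : 2 ≤ exp 1 := by linarith [add_one_le_exp (1 : ℝ)]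
  have htail : exp (exp 1 * t) / exp 1 ^ M ≤ exp t / 2 := calc
    exp (exp 1 * t) / exp 1 ^ M = exp (exp 1 * t - M) := by rw [← exp_nat_mul, mul_one, exp_sub]
    _ ≤ exp (t - 1) := exp_le_exp.2 (by nlinarith)
    _ = exp t / exp 1 := exp_sub t 1
    _ ≤ exp t / 2 := div_le_div_of_nonneg_left (exp_pos t).le two_pos he2
  linarith

end Real

theorem Finset.sum_comp_le_mul_tsum {ι κ : Type*} [DecidableEq κ] (s : Finset ι) (e : ι → κ)
    {f : κ → ℝ} (hf : ∀ k, 0 ≤ f k) (hsum : Summable f) {N : ℕ}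
    (hN : ∀ k, #{i ∈ s | e i = k} ≤ N) :
    ∑ i ∈ s, f (e i) ≤ N * ∑' k, f k := by
  rw [sum_comp]
  calc ∑ k ∈ s.image e, #{i ∈ s | e i = k} • f k ≤ ∑ k ∈ s.image e, N * f k :=
        sum_le_sum fun k _ ↦ by rw [nsmul_eq_mul]; gcongr; exacts [hf k, hN k]
    _ ≤ N * ∑' k, f k := by
        rw [← mul_sum]; gcongr; exact hsum.sum_le_tsum _ fun k _ ↦ hf k

theorem le_mul_ceil_div {a x : ℝ} (ha : 0 < a) : x ≤ a * ⌈x / a⌉₊ :=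
  (div_le_iff₀' ha).1 (Nat.le_ceil _)

theorem mul_ceil_div_lt {a x : ℝ} (ha : 0 < a) (hx : 0 ≤ x) : a * ⌈x / a⌉₊ < x + a := calc
  a * ⌈x / a⌉₊ < a * (x / a + 1) := by gcongr; exact Nat.ceil_lt_add_one (by positivity)
  _ = x + a := by field_simp

theorem card_filter_ceil_div_eq_le {a : ℝ} (ha : 0 < a) (s : Finset ℕ) (k : ℕ) :
    #{m ∈ s | ⌈((m : ℕ) : ℝ) / a⌉₊ = k} ≤ ⌈a⌉₊ + 1 := by
  have hsub : {m ∈ s | ⌈((m : ℕ) : ℝ) / a⌉₊ = k} ⊆ Icc (⌊a * k⌋₊ - ⌈a⌉₊) ⌊a * k⌋₊ := by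
    intro m hm
    obtain ⟨-, rfl⟩ := mem_filter.1 hm
    have hle := le_mul_ceil_div (x := m) ha
    have hlt := mul_ceil_div_lt ha m.cast_nonneg
    have hfloor : ⌊a * ⌈(m : ℝ) / a⌉₊⌋₊ < m + ⌈a⌉₊ := by
      rw [Nat.floor_lt (by positivity)]
      push_cast
      linarith [Nat.le_ceil a]
    rw [mem_Icc]
    exact ⟨by omega, Nat.le_floor hle⟩
  calc #{m ∈ s | ⌈((m : ℕ) : ℝ) / a⌉₊ = k} ≤ #(Icc (⌊a * k⌋₊ - ⌈a⌉₊) ⌊a * k⌋₊) := card_le_card hsub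
    _ ≤ ⌈a⌉₊ + 1 := by rw [Nat.card_Icc]; omega

theorem strictMono_floor_mul_natCast {a : ℝ} (ha : 1 ≤ a) :
    StrictMono (fun k : ℕ ↦ ⌊a * k⌋₊) := by
  refine strictMono_nat_of_lt_succ fun k ↦ ?_
  have hak : 0 ≤ a * k := by positivity
  calc ⌊a * k⌋₊ < ⌊a * k + 1⌋₊ := by rw [Nat.floor_add_one hak]; exact lt_add_one _
    _ ≤ ⌊a * ↑(k + 1)⌋₊ := Nat.floor_le_floor (by push_cast; linarith)

def powDivGamma (t y : ℝ) : ℝ := t ^ y / Gamma (y + 1)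

section powDivGamma

variable {a t y : ℝ}

theorem powDivGamma_nonneg (ht : 0 ≤ t) (hy : 0 ≤ y) : 0 ≤ powDivGamma t y :=
  div_nonneg (rpow_nonneg ht y) (Gamma_pos_of_pos (by linarith)).le

@[simp]
theorem powDivGamma_natCast (t : ℝ) (n : ℕ) : powDivGamma t n = t ^ n / n ! := by
  rw [powDivGamma, rpow_natCast, Gamma_nat_eq_factorial]

theorem hasSum_powDivGamma_natCast (t : ℝ) : HasSum (fun n : ℕ ↦ powDivGamma t n) (exp t) := by
  simpa using hasSum_pow_div_factorial t

theorem powDivGamma_add_le {θ : ℝ} (ht : 0 ≤ t) (hy : 0 < y) (hθ : 0 ≤ θ) :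
    powDivGamma t (y + θ) ≤ powDivGamma t y * (t / y) ^ θ := by
  have hΓ := Gamma_mul_rpow_le_Gamma_add (x := y + 1) (by linarith) hθ
  rw [add_sub_cancel_right, add_right_comm] at hΓ
  have hpos : 0 < Gamma (y + 1) * y ^ θ := by positivity [Gamma_pos_of_pos (by linarith : 0 < y + 1)]
  calc powDivGamma t (y + θ) ≤ t ^ y * t ^ θ / (Gamma (y + 1) * y ^ θ) := by
        rw [powDivGamma, rpow_add_of_nonneg ht hy.le hθ]
        gcongr
    _ = powDivGamma t y * (t / y) ^ θ := by
        rw [powDivGamma, div_rpow ht hy.le, mul_div_mul_comm]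

theorem le_powDivGamma_add {δ : ℝ} (ht : 0 ≤ t) (hy : 0 ≤ y) (hδ : 0 ≤ δ) :
    powDivGamma t y * (t / (y + 1 + δ)) ^ δ ≤ powDivGamma t (y + δ) := by
  have hΓ := Gamma_add_le_Gamma_mul_rpow (x := y + 1) (by linarith) hδ
  have hpos : 0 < Gamma (y + 1 + δ) := Gamma_pos_of_pos (by linarith)
  calc powDivGamma t y * (t / (y + 1 + δ)) ^ δ
      = t ^ y * t ^ δ / (Gamma (y + 1) * (y + 1 + δ) ^ δ) := by
        rw [powDivGamma, div_rpow ht (by linarith), mul_div_mul_comm]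
    _ ≤ powDivGamma t (y + δ) := by
        rw [powDivGamma, rpow_add_of_nonneg ht hy hδ, add_right_comm y δ 1]
        gcongr

theorem powDivGamma_le_floor (ht : 0 ≤ t) (hy : 1 ≤ y) :
    powDivGamma t y ≤ powDivGamma t ⌊y⌋₊ + 2 * powDivGamma t ↑(⌊y⌋₊ + 1) := by
  set m := ⌊y⌋₊
  have hm : (1 : ℝ) ≤ m := by exact_mod_cast (Nat.one_le_floor_iff y).2 hy
  have hθ0 : 0 ≤ y - m := sub_nonneg.2 (Nat.floor_le (by linarith))
  have hθ1 : y - m ≤ 1 := by linarith [Nat.lt_floor_add_one y]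
  have hrpow : (t / m) ^ (y - m) ≤ 1 + t / m := calc
    (t / m) ^ (y - m) ≤ (1 + t / m) ^ (y - m) := by gcongr; linarith
    _ ≤ (1 + t / m) ^ (1 : ℝ) := rpow_le_rpow_of_exponent_le (le_add_of_nonneg_right (by positivity)) hθ1
    _ = 1 + t / m := rpow_one _
  have hsucc : powDivGamma t m * (t / m) = powDivGamma t ↑(m + 1) * ((m + 1) / m) := by
    simp only [powDivGamma_natCast, factorial_succ, pow_succ]
    push_cast
    field_simp
  have hm2 : ((m : ℝ) + 1) / m ≤ 2 := by rw [div_le_iff₀ (by positivity)]; linarith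
  calc powDivGamma t y = powDivGamma t (m + (y - m)) := by rw [add_sub_cancel]
    _ ≤ powDivGamma t m * (t / m) ^ (y - m) := powDivGamma_add_le ht (by positivity) hθ0
    _ ≤ powDivGamma t m * (1 + t / m) := by gcongr; exact powDivGamma_nonneg ht m.cast_nonneg
    _ = powDivGamma t m + powDivGamma t ↑(m + 1) * ((m + 1) / m) := by rw [mul_one_add, hsucc]
    _ ≤ powDivGamma t m + 2 * powDivGamma t ↑(m + 1) := by
        rw [mul_comm 2]; gcongr; exact powDivGamma_nonneg ht (by positivity)

theorem hasSum_powDivGamma_add_two_mul_succ (t : ℝ) :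
    HasSum (fun m : ℕ ↦ powDivGamma t m + 2 * powDivGamma t ↑(m + 1)) (3 * exp t - 2) := by
  have hsucc : HasSum (fun m : ℕ ↦ powDivGamma t ↑(m + 1)) (exp t - 1) := by
    simpa using (hasSum_nat_add_iff' 1).2 (hasSum_powDivGamma_natCast t)
  convert (hasSum_powDivGamma_natCast t).add (hsucc.mul_left 2) using 1
  ring

theorem powDivGamma_mul_natCast_le (ha : 1 ≤ a) (ht : 0 ≤ t) (k : ℕ) :
    powDivGamma t (a * k) ≤
      powDivGamma t ⌊a * k⌋₊ + 2 * powDivGamma t ↑(⌊a * k⌋₊ + 1) := by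
  rcases k.eq_zero_or_pos with rfl | hk
  · simpa [powDivGamma, one_add_one_eq_two] using ht
  · exact powDivGamma_le_floor ht (one_le_mul_of_one_le_of_one_le ha (by exact_mod_cast hk))

theorem summable_powDivGamma_mul_natCast (ha : 1 ≤ a) (ht : 0 ≤ t) :
    Summable (fun k : ℕ ↦ powDivGamma t (a * k)) :=
  ((hasSum_powDivGamma_add_two_mul_succ t).summable.comp_injective
    (strictMono_floor_mul_natCast ha).injective).of_nonneg_of_le
    (fun k ↦ powDivGamma_nonneg ht (by positivity)) (powDivGamma_mul_natCast_le ha ht)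

theorem tsum_powDivGamma_mul_natCast_le (ha : 1 ≤ a) (ht : 0 ≤ t) :
    ∑' k : ℕ, powDivGamma t (a * k) ≤ 3 * exp t := by
  have hsum := hasSum_powDivGamma_add_two_mul_succ t
  have hinj := (strictMono_floor_mul_natCast ha).injective
  calc ∑' k : ℕ, powDivGamma t (a * k)
      ≤ ∑' k : ℕ, (powDivGamma t ⌊a * k⌋₊ + 2 * powDivGamma t ↑(⌊a * k⌋₊ + 1)) :=
        (summable_powDivGamma_mul_natCast ha ht).tsum_le_tsum (powDivGamma_mul_natCast_le ha ht)
          (hsum.summable.comp_injective hinj)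
    _ ≤ 3 * exp t - 2 := hsum.tsum_eq ▸ tsum_comp_le_tsum_of_inj hsum.summable
          (fun m ↦ add_nonneg (powDivGamma_nonneg ht (Nat.cast_nonneg _))
            (mul_nonneg zero_le_two (powDivGamma_nonneg ht (Nat.cast_nonneg _)))) hinj
    _ ≤ 3 * exp t := by linarith

theorem powDivGamma_le_mul_powDivGamma_ceil (ha : 0 < a) {m : ℕ}
    (hm : m + 1 + a ≤ 3 * t) :
    powDivGamma t m ≤ 3 ^ a * powDivGamma t (a * ⌈(m : ℝ) / a⌉₊) := by
  set δ := a * ⌈(m : ℝ) / a⌉₊ - m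
  have hδ0 : 0 ≤ δ := sub_nonneg.2 (le_mul_ceil_div ha)
  have hδa : δ ≤ a := by linarith [mul_ceil_div_lt ha m.cast_nonneg]
  have ht : 0 < t := by linarith [m.cast_nonneg (α := ℝ)]
  have hratio : (3 ^ a)⁻¹ ≤ (t / (m + 1 + δ)) ^ δ := calc
    (3 ^ a)⁻¹ = (3⁻¹ : ℝ) ^ a := (inv_rpow (by norm_num) a).symm
    _ ≤ (3⁻¹ : ℝ) ^ δ := rpow_le_rpow_of_exponent_ge (by norm_num) (by norm_num) hδa
    _ ≤ (t / (m + 1 + δ)) ^ δ := by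
        gcongr
        rw [le_div_iff₀ (by positivity)]
        linarith
  have hterm := le_powDivGamma_add ht.le m.cast_nonneg hδ0
  rw [add_sub_cancel] at hterm
  rw [← inv_mul_le_iff₀ (by positivity)]
  calc (3 ^ a)⁻¹ * powDivGamma t m ≤ powDivGamma t m * (t / (m + 1 + δ)) ^ δ := by
        rw [mul_comm]; gcongr; exact powDivGamma_nonneg ht.le m.cast_nonneg
    _ ≤ _ := hterm

theorem exp_le_mul_tsum_powDivGamma_mul_natCast (ha : 0 < a)
    (hsum : Summable (fun k : ℕ ↦ powDivGamma t (a * k))) (ht : a + 2 ≤ t) :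
    exp t ≤ 2 * 3 ^ a * (⌈a⌉₊ + 1) * ∑' k : ℕ, powDivGamma t (a * k) := by
  set M := ⌈2 * t⌉₊ + 1
  have ht0 : 0 ≤ t := by linarith
  have hM : 2 * t + 1 ≤ M := by push_cast [M]; linarith [Nat.le_ceil (2 * t)]
  have hM' : (M : ℝ) < 2 * t + 2 := by
    push_cast [M]; linarith [Nat.ceil_lt_add_one (by positivity : 0 ≤ 2 * t)]
  have hterm : ∀ m ∈ range M, powDivGamma t m ≤ 3 ^ a * powDivGamma t (a * ⌈(m : ℝ) / a⌉₊) := by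
    intro m hm
    have : (m : ℝ) + 1 ≤ M := by exact_mod_cast mem_range.1 hm
    exact powDivGamma_le_mul_powDivGamma_ceil ha (by linarith)
  have hfibre := sum_comp_le_mul_tsum (range M) (fun m : ℕ ↦ ⌈(m : ℝ) / a⌉₊)
    (fun k ↦ powDivGamma_nonneg ht0 (by positivity)) hsum (card_filter_ceil_div_eq_le ha _)
  push_cast at hfibre
  calc exp t ≤ 2 * ∑ m ∈ range M, powDivGamma t m := by
        simpa using exp_le_two_mul_sum_range ht0 hM
    _ ≤ 2 * ∑ m ∈ range M, 3 ^ a * powDivGamma t (a * ⌈(m : ℝ) / a⌉₊) := by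
        gcongr with m hm; exact hterm m hm
    _ ≤ 2 * 3 ^ a * ((⌈a⌉₊ + 1) * ∑' k : ℕ, powDivGamma t (a * k)) := by
        rw [← mul_sum, ← mul_assoc]; gcongr
    _ = 2 * 3 ^ a * (⌈a⌉₊ + 1) * ∑' k : ℕ, powDivGamma t (a * k) := by ring

end powDivGamma

theorem mittagLeffler_rpow_eq_tsum (a : ℝ) {t : ℝ} (ht : 0 ≤ t) :
    mittagLeffler a (t ^ a) = ∑' k : ℕ, powDivGamma t (a * k) := by
  refine tsum_congr fun k ↦ ?_
  rw [powDivGamma, ← rpow_mul_natCast ht]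

theorem exists_mul_exp_le_mittagLeffler_rpow {a : ℝ} (ha : 1 ≤ a) :
    ∃ c C : ℝ, 0 < c ∧ 0 < C ∧ ∀ t : ℝ, 0 ≤ t →
      c * exp t ≤ mittagLeffler a (t ^ a) ∧ mittagLeffler a (t ^ a) ≤ C * exp t := by
  set K := 2 * 3 ^ a * (⌈a⌉₊ + 1 : ℝ)
  have hK : 0 < K := by positivity
  refine ⟨min (exp (-(a + 2))) K⁻¹, 3, by positivity, by norm_num, fun t ht ↦ ?_⟩
  have hsum := summable_powDivGamma_mul_natCast ha ht
  rw [mittagLeffler_rpow_eq_tsum a ht]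
  refine ⟨?_, tsum_powDivGamma_mul_natCast_le ha ht⟩
  rcases le_total t (a + 2) with hsmall | hlarge
  · have hone : 1 ≤ ∑' k : ℕ, powDivGamma t (a * k) := by
      simpa [powDivGamma] using
        hsum.le_tsum 0 fun k _ ↦ powDivGamma_nonneg ht (by positivity)
    calc min (exp (-(a + 2))) K⁻¹ * exp t ≤ exp (-(a + 2)) * exp (a + 2) := by
          gcongr; exact min_le_left _ _
      _ = 1 := by rw [← exp_add, neg_add_cancel, exp_zero]
      _ ≤ _ := hone
  · calc min (exp (-(a + 2))) K⁻¹ * exp t ≤ K⁻¹ * exp t := by gcongr; exact min_le_right _ _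
      _ ≤ _ := by
          rw [inv_mul_le_iff₀ hK]
          exact exp_le_mul_tsum_powDivGamma_mul_natCast (by positivity) hsum hlarge

/-- The Mittag-Leffler function `ℰ_{2/s}(α^{2/s} x²)` is comparable to the
stretched exponential `exp(α x^s)`. -/
theorem mittagLeffler_comparable_exp
    (s α : ℝ) (hs : 0 < s ∧ s ≤ 2) (hα : 0 < α) :
    ∃ c C : ℝ, 0 < c ∧ 0 < C ∧
      ∀ x : ℝ, 0 ≤ x →
        c * Real.exp (α * x ^ s) ≤ mittagLeffler (2 / s) (α ^ (2 / s) * x ^ 2) ∧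
        mittagLeffler (2 / s) (α ^ (2 / s) * x ^ 2) ≤ C * Real.exp (α * x ^ s) := by
  obtain ⟨hs0, hs2⟩ := hs
  obtain ⟨c, C, hc, hC, hcomp⟩ :=
    exists_mul_exp_le_mittagLeffler_rpow (a := 2 / s) (by rw [le_div_iff₀ hs0]; linarith)
  refine ⟨c, C, hc, hC, fun x hx ↦ ?_⟩
  have harg : (α * x ^ s) ^ (2 / s) = α ^ (2 / s) * x ^ 2 := by
    rw [mul_rpow hα.le (by positivity), ← rpow_mul hx, mul_div_cancel₀ _ hs0.ne', rpow_two]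
  simpa only [harg] using hcomp (α * x ^ s) (by positivity)
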